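/- Let p, q > 1 with 1/p + 1/q = 1, and let u, v ∈ L¹(ℝ) be nonnegative. For t > 0 set u(·,t) = u * M_{2t} and v(·,t) = v * M_{2t}. Then the functional Φ_{u,v}(t) = ∫_ℝ u(x,t)^{1/p} v(x,t)^{1/q} dx converges, as t → ∞, to (∫_ℝ u(x) dx)^{1/p} (∫_ℝ v(x) dx)^{1/q}. -/

import Mathlib

/-!
Hölder's inequality and conservation of mass give `Φ(t) ≤ (∫ u)^{1/p} (∫ v)^{1/q}` for every
`t > 0`. In the self-similar variable `x = √t z` the rescaled solutions `√t u(√t z, t)` and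
`√t v(√t z, t)` converge pointwise to `(∫ u) M_2(z)` and `(∫ v) M_2(z)`, so the rescaled
integrand of `Φ(t)` converges pointwise to `(∫ u)^{1/p} (∫ v)^{1/q} M_2(z)`, whose integral is
the upper bound. Nonnegative functions whose integrals are bounded by the integral of their
pointwise limit have integrals converging to it, which gives the lower bound.
-/

open MeasureTheory Real Filter

/-- The centered Gaussian density on `ℝ` with variance `s`. -/
noncomputable def gauss (s : ℝ) : ℝ → ℝ :=
  fun x => (2 * Real.pi * s) ^ (-(1:ℝ)/2) * Real.exp (-x ^ 2 / (2 * s))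

/-- `heatSol w t = w * M_{2t}`, the solution at time `t` of the heat equation
`w_t = w_xx` with initial datum `w`. -/
noncomputable def heatSol (w : ℝ → ℝ) (t : ℝ) : ℝ → ℝ :=
  fun x => ∫ y, w (x - y) * gauss (2 * t) y

open ProbabilityTheory Topology
open scoped Convolution

lemma gauss_eq_gaussianPDFReal {s : ℝ} (hs : 0 ≤ s) :
    gauss s = gaussianPDFReal 0 s.toNNReal := by
  ext x
  simp only [gauss, gaussianPDFReal, Real.coe_toNNReal _ hs, sqrt_eq_rpow, sub_zero,
    ← Real.rpow_neg (by positivity : 0 ≤ 2 * π * s)]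
  norm_num

lemma gauss_nonneg {s : ℝ} (hs : 0 ≤ s) (x : ℝ) : 0 ≤ gauss s x := by
  rw [gauss_eq_gaussianPDFReal hs]
  exact gaussianPDFReal_nonneg _ _ _

lemma integrable_gauss {s : ℝ} (hs : 0 ≤ s) : Integrable (gauss s) := by
  rw [gauss_eq_gaussianPDFReal hs]
  exact integrable_gaussianPDFReal _ _

lemma integral_gauss {s : ℝ} (hs : 0 < s) : ∫ x, gauss s x = 1 := by
  rw [gauss_eq_gaussianPDFReal hs.le]
  exact integral_gaussianPDFReal_eq_one _ (by simpa using hs)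

lemma continuous_gauss (s : ℝ) : Continuous (gauss s) := by
  unfold gauss
  fun_prop

lemma gauss_le_gauss_zero {s : ℝ} (hs : 0 ≤ s) (x : ℝ) : gauss s x ≤ gauss s 0 := by
  have hexp : -x ^ 2 / (2 * s) ≤ 0 :=
    div_nonpos_of_nonpos_of_nonneg (neg_nonpos.mpr (sq_nonneg x)) (by positivity)
  simp only [gauss, ne_eq, OfNat.ofNat_ne_zero, not_false_eq_true, zero_pow, neg_zero, zero_div,
    exp_zero, mul_one]
  exact mul_le_of_le_one_right (by positivity) (exp_le_one_iff.mpr hexp)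

lemma sqrt_mul_gauss_two_mul {t : ℝ} (ht : 0 < t) (x : ℝ) :
    √t * gauss (2 * t) (√t * x) = gauss 2 x := by
  have hconst : √t * (2 * π * (2 * t)) ^ (-(1:ℝ)/2) = (2 * π * 2) ^ (-(1:ℝ)/2) := by
    rw [show 2 * π * (2 * t) = 2 * π * 2 * t by ring, Real.mul_rpow (by positivity) ht.le,
      Real.sqrt_eq_rpow, mul_left_comm, ← Real.rpow_add ht]
    norm_num
  have hexp : -(√t * x) ^ 2 / (2 * (2 * t)) = -x ^ 2 / (2 * 2) := by
    rw [mul_pow, Real.sq_sqrt ht.le]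
    field_simp
  unfold gauss
  rw [← mul_assoc, hconst, hexp]

section Heat

lemma heatSol_eq_convolution (w : ℝ → ℝ) (t : ℝ) :
    heatSol w t = gauss (2 * t) ⋆[ContinuousLinearMap.mul ℝ ℝ] w := by
  ext x
  simp only [heatSol, convolution_def, ContinuousLinearMap.mul_apply', mul_comm]

lemma heatSol_eq_integral_mul_gauss_sub (w : ℝ → ℝ) (t x : ℝ) :
    heatSol w t x = ∫ y, w y * gauss (2 * t) (x - y) := by
  rw [heatSol, ← integral_sub_left_eq_self _ volume x]
  simp

variable {w : ℝ → ℝ} {t : ℝ}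

lemma integrable_heatSol (hw : Integrable w) (ht : 0 ≤ t) : Integrable (heatSol w t) := by
  rw [heatSol_eq_convolution]
  exact (integrable_gauss (by positivity)).integrable_convolution _ hw

lemma integral_heatSol (hw : Integrable w) (ht : 0 < t) :
    ∫ x, heatSol w t x = ∫ x, w x := by
  rw [heatSol_eq_convolution, integral_convolution _ (integrable_gauss (by positivity)) hw,
    integral_gauss (by positivity)]
  simp

lemma heatSol_nonneg (hw : ∀ x, 0 ≤ w x) (ht : 0 ≤ t) (x : ℝ) : 0 ≤ heatSol w t x :=
  integral_nonneg fun y => mul_nonneg (hw _) (gauss_nonneg (by positivity) _)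

lemma tendsto_sqrt_mul_heatSol (hw : Integrable w) (z : ℝ) :
    Tendsto (fun t => √t * heatSol w t (√t * z)) atTop (𝓝 ((∫ x, w x) * gauss 2 z)) := by
  have hrw : ∀ᶠ t in atTop,
      ∫ y, w y * gauss 2 (z - y / √t) = √t * heatSol w t (√t * z) := by
    filter_upwards [eventually_gt_atTop 0] with t ht
    have hsqrt : 0 < √t := Real.sqrt_pos.mpr ht
    rw [heatSol_eq_integral_mul_gauss_sub, ← integral_const_mul]
    congr 1 with y
    rw [← sqrt_mul_gauss_two_mul ht, mul_sub, mul_div_cancel₀ _ hsqrt.ne']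
    ring
  refine Tendsto.congr' hrw ?_
  rw [← integral_mul_const]
  refine tendsto_integral_filter_of_dominated_convergence (fun y => ‖w y‖ * gauss 2 0)
    (Eventually.of_forall fun t => hw.aestronglyMeasurable.mul
      ((continuous_gauss 2).comp (by fun_prop)).aestronglyMeasurable)
    (Eventually.of_forall fun t => Eventually.of_forall fun y => ?_)
    (hw.norm.mul_const _) (Eventually.of_forall fun y => ?_)
  · rw [norm_mul, Real.norm_of_nonneg (gauss_nonneg zero_le_two _)]
    exact mul_le_mul_of_nonneg_left (gauss_le_gauss_zero zero_le_two _) (norm_nonneg _)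
  · have hlim : Tendsto (fun t => z - y / √t) atTop (𝓝 z) := by
      simpa using tendsto_const_nhds.sub
        (tendsto_const_nhds.div_atTop tendsto_sqrt_atTop)
    exact ((continuous_gauss 2).tendsto z |>.comp hlim).const_mul (w y)

end Heat

section Holder

variable {X : Type*} [MeasurableSpace X] {μ : Measure X} {α β : ℝ}

lemma mul_rpow_mul_mul_rpow_of_add_eq_one (hαβ : α + β = 1) {c a b : ℝ} (hc : 0 ≤ c)
    (ha : 0 ≤ a) (hb : 0 ≤ b) : (c * a) ^ α * (c * b) ^ β = c * (a ^ α * b ^ β) := by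
  rw [Real.mul_rpow hc ha, Real.mul_rpow hc hb, mul_mul_mul_comm,
    ← Real.rpow_add' hc (by simp [hαβ]), hαβ, Real.rpow_one]

variable {f g : X → ℝ}

/-- Young's inequality `f^α g^β ≤ α f + β g` gives the integrable majorant. -/
lemma MeasureTheory.Integrable.rpow_mul_rpow (hf : Integrable f μ) (hg : Integrable g μ)
    (hf0 : 0 ≤ᵐ[μ] f) (hg0 : 0 ≤ᵐ[μ] g) (hα : 0 ≤ α) (hβ : 0 ≤ β) (hαβ : α + β = 1) :
    Integrable (fun x => f x ^ α * g x ^ β) μ := by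
  refine ((hf.const_mul α).add (hg.const_mul β)).mono'
    ((hf.aemeasurable.pow_const α).mul (hg.aemeasurable.pow_const β)).aestronglyMeasurable ?_
  filter_upwards [hf0, hg0] with x hfx hgx
  rw [Real.norm_of_nonneg (mul_nonneg (rpow_nonneg hfx _) (rpow_nonneg hgx _))]
  exact Real.geom_mean_le_arith_mean2_weighted hα hβ hfx hgx hαβ

lemma integral_rpow_mul_rpow_le (hf : Integrable f μ) (hg : Integrable g μ) (hf0 : 0 ≤ᵐ[μ] f)
    (hg0 : 0 ≤ᵐ[μ] g) (hα : 0 ≤ α) (hβ : 0 ≤ β) (hαβ : α + β = 1) :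
    ∫ x, f x ^ α * g x ^ β ∂μ ≤ (∫ x, f x ∂μ) ^ α * (∫ x, g x ∂μ) ^ β := by
  have hF0 := integral_nonneg_of_ae hf0
  have hG0 := integral_nonneg_of_ae hg0
  have hofReal : ∀ {a b : ℝ}, 0 ≤ a → 0 ≤ b →
      ENNReal.ofReal (a ^ α * b ^ β) = ENNReal.ofReal a ^ α * ENNReal.ofReal b ^ β :=
    fun ha hb => by
      rw [ENNReal.ofReal_mul (by positivity), ENNReal.ofReal_rpow_of_nonneg ha hα,
        ENNReal.ofReal_rpow_of_nonneg hb hβ]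
  have hholder := ENNReal.lintegral_mul_norm_pow_le hf.aemeasurable.ennreal_ofReal
    hg.aemeasurable.ennreal_ofReal hα hβ hαβ (μ := μ)
  rw [← ofReal_integral_eq_lintegral_ofReal hf hf0, ← ofReal_integral_eq_lintegral_ofReal hg hg0,
    ← hofReal hF0 hG0] at hholder
  refine (ENNReal.ofReal_le_ofReal_iff
    (mul_nonneg (rpow_nonneg hF0 _) (rpow_nonneg hG0 _))).mp (le_trans (le_of_eq ?_) hholder)
  rw [ofReal_integral_eq_lintegral_ofReal (hf.rpow_mul_rpow hg hf0 hg0 hα hβ hαβ)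
    (by filter_upwards [hf0, hg0] with x hfx hgx
        using mul_nonneg (rpow_nonneg hfx _) (rpow_nonneg hgx _))]
  exact lintegral_congr_ae (by filter_upwards [hf0, hg0] with x hfx hgx using hofReal hfx hgx)

end Holder

/-- The lower bound is dominated convergence for `min (f i) g → g`, dominated by `|g|`. -/
theorem tendsto_integral_of_tendsto_of_integral_le {X ι : Type*} [MeasurableSpace X]
    {μ : Measure X} {l : Filter ι} [l.IsCountablyGenerated] {f : ι → X → ℝ} {g : X → ℝ}
    (hf : ∀ᶠ i in l, Integrable (f i) μ) (hf0 : ∀ᶠ i in l, 0 ≤ᵐ[μ] f i) (hg : Integrable g μ)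
    (hle : ∀ᶠ i in l, ∫ x, f i x ∂μ ≤ ∫ x, g x ∂μ)
    (hlim : ∀ᵐ x ∂μ, Tendsto (fun i => f i x) l (𝓝 (g x))) :
    Tendsto (fun i => ∫ x, f i x ∂μ) l (𝓝 (∫ x, g x ∂μ)) := by
  have hmin : Tendsto (fun i => ∫ x, min (f i x) (g x) ∂μ) l (𝓝 (∫ x, g x ∂μ)) := by
    refine tendsto_integral_filter_of_dominated_convergence (fun x => ‖g x‖)
      (hf.mono fun i hfi => hfi.aestronglyMeasurable.inf hg.aestronglyMeasurable)
      (hf0.mono fun i hfi => hfi.mono fun x hfx => ?_) hg.norm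
      (hlim.mono fun x hx => by simpa using hx.min (tendsto_const_nhds (x := g x)))
    rw [Real.norm_eq_abs, Real.norm_eq_abs, abs_le]
    exact ⟨le_min ((neg_nonpos.mpr (abs_nonneg _)).trans hfx) (neg_abs_le _),
      (min_le_right _ _).trans (le_abs_self _)⟩
  refine tendsto_of_tendsto_of_tendsto_of_le_of_le' hmin tendsto_const_nhds ?_ hle
  filter_upwards [hf] with i hfi
  exact integral_mono (hfi.inf hg) hfi (fun x => min_le_left _ _)

lemma integral_mul_comp_mul_left {c : ℝ} (hc : 0 < c) (F : ℝ → ℝ) :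
    ∫ z, c * F (c * z) = ∫ x, F x := by
  rw [integral_const_mul, Measure.integral_comp_mul_left, abs_of_pos (inv_pos.mpr hc),
    smul_eq_mul, mul_inv_cancel_left₀ hc.ne']

section HeatHolder

variable {u v : ℝ → ℝ} {α β t : ℝ}

lemma heatSol_rpow_mul_rpow_nonneg (hu0 : ∀ x, 0 ≤ u x) (hv0 : ∀ x, 0 ≤ v x) (ht : 0 ≤ t)
    (x : ℝ) : 0 ≤ heatSol u t x ^ α * heatSol v t x ^ β :=
  mul_nonneg (rpow_nonneg (heatSol_nonneg hu0 ht x) _) (rpow_nonneg (heatSol_nonneg hv0 ht x) _)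

lemma integrable_heatSol_rpow_mul_rpow (hu : Integrable u) (hv : Integrable v)
    (hu0 : ∀ x, 0 ≤ u x) (hv0 : ∀ x, 0 ≤ v x) (hα : 0 ≤ α) (hβ : 0 ≤ β) (hαβ : α + β = 1)
    (ht : 0 ≤ t) : Integrable (fun x => heatSol u t x ^ α * heatSol v t x ^ β) :=
  (integrable_heatSol hu ht).rpow_mul_rpow (integrable_heatSol hv ht)
    (Eventually.of_forall (heatSol_nonneg hu0 ht)) (Eventually.of_forall (heatSol_nonneg hv0 ht))
    hα hβ hαβ

lemma integral_heatSol_rpow_mul_rpow_le (hu : Integrable u) (hv : Integrable v)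
    (hu0 : ∀ x, 0 ≤ u x) (hv0 : ∀ x, 0 ≤ v x) (hα : 0 ≤ α) (hβ : 0 ≤ β) (hαβ : α + β = 1)
    (ht : 0 < t) :
    ∫ x, heatSol u t x ^ α * heatSol v t x ^ β ≤ (∫ x, u x) ^ α * (∫ x, v x) ^ β := by
  simpa only [integral_heatSol hu ht, integral_heatSol hv ht] using
    integral_rpow_mul_rpow_le (integrable_heatSol hu ht.le) (integrable_heatSol hv ht.le)
      (Eventually.of_forall (heatSol_nonneg hu0 ht.le))
      (Eventually.of_forall (heatSol_nonneg hv0 ht.le)) hα hβ hαβ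

lemma tendsto_sqrt_mul_heatSol_rpow_mul_rpow (hu : Integrable u) (hv : Integrable v)
    (hu0 : ∀ x, 0 ≤ u x) (hv0 : ∀ x, 0 ≤ v x) (hα : 0 ≤ α) (hβ : 0 ≤ β) (hαβ : α + β = 1)
    (z : ℝ) :
    Tendsto (fun t => √t * (heatSol u t (√t * z) ^ α * heatSol v t (√t * z) ^ β)) atTop
      (𝓝 (gauss 2 z * ((∫ x, u x) ^ α * (∫ x, v x) ^ β))) := by
  have hlim := ((tendsto_sqrt_mul_heatSol hu z).rpow_const (Or.inr hα)).mul
    ((tendsto_sqrt_mul_heatSol hv z).rpow_const (Or.inr hβ))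
  rw [mul_comm (∫ x, u x), mul_comm (∫ x, v x), mul_rpow_mul_mul_rpow_of_add_eq_one hαβ
    (gauss_nonneg zero_le_two z) (integral_nonneg hu0) (integral_nonneg hv0)] at hlim
  refine hlim.congr' ?_
  filter_upwards [eventually_ge_atTop 0] with t ht
  exact mul_rpow_mul_mul_rpow_of_add_eq_one hαβ (sqrt_nonneg t) (heatSol_nonneg hu0 ht _)
    (heatSol_nonneg hv0 ht _)

end HeatHolder

/-- As `t → ∞`, `Φ_{u,v}(t) = ∫ u(x,t)^{1/p} v(x,t)^{1/q} dx` converges to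
`(∫ u)^{1/p} (∫ v)^{1/q}`. -/
theorem holder_functional_limit (p q : ℝ) (hp : 1 < p) (hq : 1 < q)
    (hpq : 1/p + 1/q = 1) (u v : ℝ → ℝ)
    (hu : Integrable u) (hv : Integrable v)
    (hu0 : ∀ x, 0 ≤ u x) (hv0 : ∀ x, 0 ≤ v x) :
    Tendsto (fun t => ∫ x, heatSol u t x ^ (1/p) * heatSol v t x ^ (1/q)) atTop
      (nhds ((∫ x, u x) ^ (1/p) * (∫ x, v x) ^ (1/q))) := by
  have hα : 0 ≤ 1 / p := one_div_nonneg.mpr (by linarith)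
  have hβ : 0 ≤ 1 / q := one_div_nonneg.mpr (by linarith)
  set L := (∫ x, u x) ^ (1/p) * (∫ x, v x) ^ (1/q)
  set F : ℝ → ℝ → ℝ := fun t x => heatSol u t x ^ (1/p) * heatSol v t x ^ (1/q)
  have hL : ∫ z, gauss 2 z * L = L := by
    rw [integral_mul_const, integral_gauss two_pos, one_mul]
  have hlim := tendsto_integral_of_tendsto_of_integral_le (μ := volume)
    (f := fun t z => √t * F t (√t * z)) (g := fun z => gauss 2 z * L)
    ((eventually_gt_atTop 0).mono fun t ht =>
      ((integrable_heatSol_rpow_mul_rpow hu hv hu0 hv0 hα hβ hpq ht.le).comp_mul_left'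
        (sqrt_pos.2 ht).ne').const_mul _)
    ((eventually_ge_atTop 0).mono fun t ht => Eventually.of_forall fun z =>
      mul_nonneg (sqrt_nonneg t) (heatSol_rpow_mul_rpow_nonneg hu0 hv0 ht _))
    ((integrable_gauss zero_le_two).mul_const L)
    ((eventually_gt_atTop 0).mono fun t ht => by
      rw [integral_mul_comp_mul_left (sqrt_pos.2 ht), hL]
      exact integral_heatSol_rpow_mul_rpow_le hu hv hu0 hv0 hα hβ hpq ht)
    (Eventually.of_forall (tendsto_sqrt_mul_heatSol_rpow_mul_rpow hu hv hu0 hv0 hα hβ hpq))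
  rw [hL] at hlim
  refine hlim.congr' ?_
  filter_upwards [eventually_gt_atTop 0] with t ht
  exact integral_mul_comp_mul_left (sqrt_pos.2 ht) (F t)
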